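/- (Lemma 1) For every nonzero vector g ∈ ℝ^d and every positive integer s, the variance of the s-Partition Encoding Scheme satisfies Var[φ'(g) | g] = E[‖φ'(g) − g‖² | g] ≤ (d/s²)·‖g‖_∞². -/

import Mathlib

open MeasureTheory ProbabilityTheory
open scoped ProbabilityTheory

/-! The bound holds for every realisation of the encoding, not only on average: with
`t = |gᵢ| / ‖g‖∞` in `[lᵢ/s, (lᵢ+1)/s]` and `bᵢ` an endpoint of that interval, the `i`-th
error is `sign gᵢ · (bᵢ - t) · ‖g‖∞`, of absolute value at most `‖g‖∞ / s`. Summing the `d`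
squared errors and integrating against a probability measure gives the claim. -/

lemma Real.sign_mul_abs (x : ℝ) : Real.sign x * |x| = x := by
  rcases lt_trichotomy x 0 with hx | rfl | hx
  · simp [Real.sign_of_neg hx, abs_of_neg hx]
  · simp
  · simp [Real.sign_of_pos hx, abs_of_pos hx]

lemma Real.abs_sign_le_one (x : ℝ) : |Real.sign x| ≤ 1 := by
  rcases Real.sign_apply_eq x with h | h | h <;> simp [h]

lemma abs_sub_le_of_mem_Icc_of_eq_or_eq {a b t x : ℝ} (ht : t ∈ Set.Icc a b)
    (hx : x = a ∨ x = b) : |x - t| ≤ b - a := by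
  rw [abs_sub_le_iff]
  rcases hx with rfl | rfl <;> constructor <;> linarith [ht.1, ht.2]

lemma sign_mul_mul_sub_eq {x N : ℝ} (hx : |x| ≤ N) (b : ℝ) :
    Real.sign x * b * N - x = Real.sign x * (b - |x| / N) * N := by
  have hN : |x| / N * N = |x| :=
    div_mul_cancel_of_imp fun h ↦ le_antisymm (h ▸ hx) (abs_nonneg x)
  linear_combination Real.sign x * hN + Real.sign_mul_abs x

lemma sq_sign_mul_mul_sub_le {x N b δ : ℝ} (hx : |x| ≤ N) (hb : |b - |x| / N| ≤ δ) :
    (Real.sign x * b * N - x) ^ 2 ≤ (δ * N) ^ 2 := by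
  have hN : 0 ≤ N := (abs_nonneg x).trans hx
  rw [sign_mul_mul_sub_eq hx, ← sq_abs, abs_mul, abs_mul, abs_of_nonneg hN]
  gcongr
  exact (mul_le_mul (Real.abs_sign_le_one x) hb (abs_nonneg _) zero_le_one).trans_eq (one_mul δ)

lemma integral_le_of_forall_le_of_nonneg {α : Type*} [MeasurableSpace α] {μ : Measure α}
    [IsProbabilityMeasure μ] {f : α → ℝ} {C : ℝ} (hf : ∀ x, 0 ≤ f x) (hC : ∀ x, f x ≤ C) :
    ∫ x, f x ∂μ ≤ C := by
  have hnorm : ∀ᵐ x ∂μ, ‖f x‖ ≤ C :=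
    ae_of_all _ fun x ↦ (Real.norm_of_nonneg (hf x)).symm ▸ hC x
  simpa using (le_abs_self _).trans (norm_integral_le_of_norm_le_const hnorm)

theorem stmt1_general {Ω : Type*} [MeasureSpace Ω] [IsProbabilityMeasure (ℙ : Measure Ω)]
    {d : ℕ} (g : Fin d → ℝ) (s : ℕ)
    (l : Fin d → ℕ)
    (hlo : ∀ i, (l i : ℝ) / s ≤ |g i| / ‖g‖)
    (hhi : ∀ i, |g i| / ‖g‖ ≤ ((l i : ℝ) + 1) / s)
    (b : Fin d → Ω → ℝ)
    (hbval : ∀ i, ∀ ω, b i ω = (l i : ℝ) / s ∨ b i ω = ((l i : ℝ) + 1) / s) :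
    (∫ ω, ∑ i, (Real.sign (g i) * b i ω * ‖g‖ - g i) ^ 2)
      ≤ (d / (s : ℝ) ^ 2) * ‖g‖ ^ 2 := by
  have hcoord : ∀ i ω, (Real.sign (g i) * b i ω * ‖g‖ - g i) ^ 2 ≤ (1 / s * ‖g‖) ^ 2 := by
    intro i ω
    have hb := abs_sub_le_of_mem_Icc_of_eq_or_eq ⟨hlo i, hhi i⟩ (hbval i ω)
    rw [add_div, add_sub_cancel_left] at hb
    exact sq_sign_mul_mul_sub_le (norm_le_pi_norm g i) hb
  refine integral_le_of_forall_le_of_nonneg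
    (fun ω ↦ Finset.sum_nonneg fun i _ ↦ sq_nonneg _) fun ω ↦ ?_
  calc ∑ i, (Real.sign (g i) * b i ω * ‖g‖ - g i) ^ 2
      ≤ ∑ _i : Fin d, (1 / s * ‖g‖) ^ 2 := Finset.sum_le_sum fun i _ ↦ hcoord i ω
    _ = (d / (s : ℝ) ^ 2) * ‖g‖ ^ 2 := by
      rw [Finset.sum_const, Finset.card_univ, Fintype.card_fin, nsmul_eq_mul]
      ring

/-- Lemma 1: variance bound of the s-Partition Encoding Scheme.
For a nonzero vector `g : Fin d → ℝ` (here `‖g‖` is the ℓ∞ norm, since `Fin d → ℝ`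
carries the `Pi` sup norm), a positive integer `s`, levels `l i < s` with
`l i / s ≤ |g i| / ‖g‖ ≤ (l i + 1) / s`, and random variables `b i` taking the value
`l i / s` with probability `1 - s·|g i|/‖g‖ + l i` and the value `(l i + 1)/s` with
probability `s·|g i|/‖g‖ - l i`, the decoded vector `φ'(g) i = sign (g i) · b i · ‖g‖`
satisfies `E[‖φ'(g) - g‖₂²] ≤ (d / s²)·‖g‖∞²`. -/
theorem stmt1 {Ω : Type*} [MeasureSpace Ω] [IsProbabilityMeasure (ℙ : Measure Ω)]
    {d : ℕ} (g : Fin d → ℝ) (hg : g ≠ 0) (s : ℕ) (hs : 0 < s)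
    (l : Fin d → ℕ) (hl : ∀ i, l i < s)
    (hlo : ∀ i, (l i : ℝ) / s ≤ |g i| / ‖g‖)
    (hhi : ∀ i, |g i| / ‖g‖ ≤ ((l i : ℝ) + 1) / s)
    (b : Fin d → Ω → ℝ)
    (hbmeas : ∀ i, Measurable (b i))
    (hbval : ∀ i, ∀ ω, b i ω = (l i : ℝ) / s ∨ b i ω = ((l i : ℝ) + 1) / s)
    (hblow : ∀ i, ℙ {ω | b i ω = (l i : ℝ) / s}
      = ENNReal.ofReal (1 - s * (|g i| / ‖g‖) + l i))
    (hbhigh : ∀ i, ℙ {ω | b i ω = ((l i : ℝ) + 1) / s}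
      = ENNReal.ofReal (s * (|g i| / ‖g‖) - l i)) :
    (∫ ω, ∑ i, (Real.sign (g i) * b i ω * ‖g‖ - g i) ^ 2)
      ≤ (d / (s : ℝ) ^ 2) * ‖g‖ ^ 2 :=
  stmt1_general g s l hlo hhi b hbval
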